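/- arXiv:math/0703360 — 7 statements merged into one kernel-verified Lean document; each statement's English description precedes it below -/
import Mathlib

section
/- Let f : ℝ^k → ℝ be a polynomial and Θ = {t ∈ ℝ^k : f(t) ≥ 0}. Suppose θ ∈ Θ with f(θ) = 0. Write f(θ + x) = Σ_{h≥d} f_h(x) as a sum of homogeneous polynomials f_h of degree h, where f_d = f_{θ,min} is the nonzero homogeneous term of smallest degree. Then the tangent cone T_Θ(θ) is contained in {τ ∈ ℝ^k : f_{θ,min}(τ) ≥ 0}. -/
/-!
Put `g x = f (θ + x) = ∑_{h ≥ d} g_h x`. If `θ + xₙ ∈ Θ`, `xₙ → 0` and `αₙ • xₙ → τ`, then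
`αₙ ^ d * g xₙ ≥ 0`. Homogeneity gives `αₙ ^ d * g_d xₙ = g_d (αₙ • xₙ) → g_d τ`, while for `h > d`
the term `αₙ ^ d * g_h xₙ` is bounded by `C * ‖αₙ • xₙ‖ ^ d * ‖xₙ‖ ^ (h - d) → 0`. So `g_d τ` is a
limit of nonnegative numbers.
-/

open Filter Topology

/-- The tangent cone of a set `s` at a point `x`: limits of sequences `αₙ • (θₙ - x)`
with `αₙ > 0` and `θₙ ∈ s` converging to `x`. -/
def tangentConeAt' {E : Type*} [AddCommGroup E] [Module ℝ E] [TopologicalSpace E]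
    (s : Set E) (x : E) : Set E :=
  {y | ∃ (α : ℕ → ℝ) (p : ℕ → E), (∀ n, 0 < α n) ∧ (∀ n, p n ∈ s) ∧
    Tendsto p atTop (𝓝 x) ∧ Tendsto (fun n => α n • (p n - x)) atTop (𝓝 y)}

namespace MvPolynomial

variable {σ R 𝕜 : Type*}

theorem eval_bind₁_X_add_C [CommSemiring R] (f : MvPolynomial σ R) (θ x : σ → R) :
    eval x (bind₁ (fun i => X i + C (θ i)) f) = eval (x + θ) f := by
  rw [eval, eval₂Hom_bind₁]
  simp only [coe_eval₂Hom, eval₂_add, eval₂_X, eval₂_C, RingHom.id_apply, eval₂_id, Pi.add_def]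

theorem IsHomogeneous.eval_smul [CommSemiring R] {φ : MvPolynomial σ R} {n : ℕ}
    (hφ : φ.IsHomogeneous n) (c : R) (x : σ → R) :
    eval (c • x) φ = c ^ n * eval x φ := by
  simp only [eval_eq, Finset.mul_sum]
  refine Finset.sum_congr rfl fun m hm => ?_
  simp only [Pi.smul_apply, smul_eq_mul, mul_pow, Finset.prod_mul_distrib,
    Finset.prod_pow_eq_pow_sum, ← hφ.degree_eq_sum_deg_support hm]
  ring

theorem IsHomogeneous.tendsto_pow_mul_eval [CommSemiring R] [TopologicalSpace R]
    [IsTopologicalSemiring R] {φ : MvPolynomial σ R} {d : ℕ} (hφ : φ.IsHomogeneous d)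
    {ι : Type*} {l : Filter ι} {α : ι → R} {x : ι → σ → R} {τ : σ → R}
    (hαx : Tendsto (fun i => α i • x i) l (𝓝 τ)) :
    Tendsto (fun i => α i ^ d * eval (x i) φ) l (𝓝 (eval τ φ)) :=
  (((continuous_eval φ).tendsto τ).comp hαx).congr fun i => hφ.eval_smul (α i) (x i)

theorem IsHomogeneous.exists_norm_eval_le [NormedField 𝕜] [Fintype σ]
    {φ : MvPolynomial σ 𝕜} {n : ℕ} (hφ : φ.IsHomogeneous n) :
    ∃ C, ∀ x : σ → 𝕜, ‖eval x φ‖ ≤ C * ‖x‖ ^ n := by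
  refine ⟨∑ m ∈ φ.support, ‖coeff m φ‖, fun x => ?_⟩
  rw [eval_eq, Finset.sum_mul]
  refine (norm_sum_le _ _).trans (Finset.sum_le_sum fun m hm => ?_)
  rw [norm_mul, norm_prod, hφ.degree_eq_sum_deg_support hm, ← Finset.prod_pow_eq_pow_sum]
  gcongr with i
  rw [norm_pow]
  gcongr
  exact norm_le_pi_norm x i

section Rescaling

variable [NormedField 𝕜] [Fintype σ] {ι : Type*} {l : Filter ι} {α : ι → 𝕜}
  {x : ι → σ → 𝕜} {τ : σ → 𝕜}

theorem IsHomogeneous.tendsto_pow_mul_eval_of_lt {φ : MvPolynomial σ 𝕜} {d h : ℕ}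
    (hφ : φ.IsHomogeneous h) (hdh : d < h) (hx : Tendsto x l (𝓝 0))
    (hαx : Tendsto (fun i => α i • x i) l (𝓝 τ)) :
    Tendsto (fun i => α i ^ d * eval (x i) φ) l (𝓝 0) := by
  obtain ⟨C, hC⟩ := hφ.exists_norm_eval_le
  have hbound : ∀ i, ‖α i ^ d * eval (x i) φ‖ ≤ C * ‖α i • x i‖ ^ d * ‖x i‖ ^ (h - d) := by
    intro i
    calc ‖α i ^ d * eval (x i) φ‖ ≤ ‖α i‖ ^ d * (C * ‖x i‖ ^ h) := by
          rw [norm_mul, norm_pow]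
          gcongr
          exact hC (x i)
      _ = C * ‖α i • x i‖ ^ d * ‖x i‖ ^ (h - d) := by
          rw [norm_smul, ← Nat.add_sub_cancel' hdh.le, pow_add, Nat.add_sub_cancel_left]
          ring
  refine squeeze_zero_norm hbound ?_
  have hlim := (tendsto_const_nhds (x := C)).mul
    ((hαx.norm.pow d).mul ((tendsto_zero_iff_norm_tendsto_zero.mp hx).pow (h - d)))
  simpa [← mul_assoc, zero_pow (Nat.sub_ne_zero_of_lt hdh)] using hlim

theorem tendsto_pow_mul_eval_of_homogeneousComponent_eq_zero {g : MvPolynomial σ 𝕜} {d : ℕ}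
    (hmin : ∀ e < d, homogeneousComponent e g = 0) (hx : Tendsto x l (𝓝 0))
    (hαx : Tendsto (fun i => α i • x i) l (𝓝 τ)) :
    Tendsto (fun i => α i ^ d * eval (x i) g) l (𝓝 (eval τ (homogeneousComponent d g))) := by
  have hterm : ∀ e ∈ Finset.range (g.totalDegree + 1),
      Tendsto (fun i => α i ^ d * eval (x i) (homogeneousComponent e g)) l
        (𝓝 (if e = d then eval τ (homogeneousComponent e g) else 0)) := by
    intro e _
    rcases lt_trichotomy e d with hlt | rfl | hgt
    · simpa [hmin e hlt, hlt.ne] using tendsto_const_nhds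
    · simpa using (homogeneousComponent_isHomogeneous e g).tendsto_pow_mul_eval hαx
    · simpa [hgt.ne'] using
        (homogeneousComponent_isHomogeneous e g).tendsto_pow_mul_eval_of_lt hgt hx hαx
  have hsum := tendsto_finsetSum _ hterm
  rw [Finset.sum_ite_eq'] at hsum
  convert hsum using 2 with i
  · conv_lhs => rw [← sum_homogeneousComponent g]
    rw [map_sum, Finset.mul_sum]
  · split_ifs with hd
    · rfl
    · rw [homogeneousComponent_eq_zero d g (by simpa [Nat.lt_succ_iff] using hd), map_zero]

end Rescaling

end MvPolynomial

open MvPolynomial in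
theorem tangentCone_subset_min_nonneg_general (k : ℕ) (f : MvPolynomial (Fin k) ℝ)
    (θ : Fin k → ℝ) (d : ℕ)
    (hmin : ∀ e < d, homogeneousComponent e (bind₁ (fun i => X i + C (θ i)) f) = 0) :
    tangentConeAt' {t : Fin k → ℝ | 0 ≤ MvPolynomial.eval t f} θ ⊆
      {τ : Fin k → ℝ |
        0 ≤ MvPolynomial.eval τ (homogeneousComponent d (bind₁ (fun i => X i + C (θ i)) f))} := by
  rintro τ ⟨α, p, hα, hp, hpθ, hαp⟩
  have hp' : Tendsto (fun n => p n - θ) atTop (𝓝 0) := by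
    simpa using hpθ.sub_const θ
  refine ge_of_tendsto' (tendsto_pow_mul_eval_of_homogeneousComponent_eq_zero hmin hp' hαp)
    fun n => mul_nonneg (pow_nonneg (hα n).le d) ?_
  simpa [eval_bind₁_X_add_C] using hp n

open MvPolynomial in
theorem tangentCone_subset_min_nonneg (k : ℕ) (f : MvPolynomial (Fin k) ℝ)
    (θ : Fin k → ℝ) (h0 : MvPolynomial.eval θ f = 0) (d : ℕ)
    (hd : homogeneousComponent d (bind₁ (fun i => X i + C (θ i)) f) ≠ 0)
    (hmin : ∀ e < d, homogeneousComponent e (bind₁ (fun i => X i + C (θ i)) f) = 0) :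
    tangentConeAt' {t : Fin k → ℝ | 0 ≤ MvPolynomial.eval t f} θ ⊆
      {τ : Fin k → ℝ |
        0 ≤ MvPolynomial.eval τ (homogeneousComponent d (bind₁ (fun i => X i + C (θ i)) f))} :=
  tangentCone_subset_min_nonneg_general k f θ d hmin
end

section
/- Let f be a polynomial in ℝ[t₁,…,t_k] vanishing on a set Θ ⊆ ℝ^k, let θ ∈ Θ, and let f_{θ,min} be the lowest-degree nonzero homogeneous component of x ↦ f(θ + x). Then every τ in the tangent cone T_Θ(θ) satisfies f_{θ,min}(τ) = 0. In particular the tangent cone is contained in the algebraic tangent cone A_Θ(θ) = {τ : f_{θ,min}(τ) = 0 for all f vanishing on Θ}. -/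
open Filter Topology

open MvPolynomial in
lemma eval_smul_isHomogeneous {k : ℕ} {p : MvPolynomial (Fin k) ℝ} {n : ℕ}
    (hp : p.IsHomogeneous n) (c : ℝ) (x : Fin k → ℝ) :
    MvPolynomial.eval (c • x) p = c ^ n * MvPolynomial.eval x p := by
  rw [eval_eq, eval_eq, Finset.mul_sum]
  refine Finset.sum_congr rfl fun s hs => ?_
  have hdeg : ∑ i ∈ s.support, s i = n := by
    have h := hp (mem_support_iff.mp hs)
    simpa [Finsupp.weight_apply, Finsupp.sum] using h
  have : ∏ i ∈ s.support, (c • x) i ^ s i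
      = c ^ n * ∏ i ∈ s.support, x i ^ s i := by
    simp only [Pi.smul_apply, smul_eq_mul, mul_pow]
    rw [Finset.prod_mul_distrib, Finset.prod_pow_eq_pow_sum, hdeg]
  rw [this]; ring

open MvPolynomial in
theorem tangentCone_min_vanishes (k : ℕ) (Θ : Set (Fin k → ℝ)) (f : MvPolynomial (Fin k) ℝ)
    (hvanish : ∀ x ∈ Θ, MvPolynomial.eval x f = 0) (θ : Fin k → ℝ) (hθ : θ ∈ Θ) (d : ℕ)
    (hd : homogeneousComponent d (bind₁ (fun i => X i + C (θ i)) f) ≠ 0)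
    (hmin : ∀ e < d, homogeneousComponent e (bind₁ (fun i => X i + C (θ i)) f) = 0) :
    ∀ τ ∈ tangentConeAt' Θ θ,
      MvPolynomial.eval τ (homogeneousComponent d (bind₁ (fun i => X i + C (θ i)) f)) = 0 := by
  set g : MvPolynomial (Fin k) ℝ := bind₁ (fun i => X i + C (θ i)) f with hg
  -- key: evaluating g at v equals evaluating f at v + θ
  have hgval : ∀ v : Fin k → ℝ, MvPolynomial.eval v g = MvPolynomial.eval (v + θ) f := by
    intro v
    rw [hg]
    have h : MvPolynomial.eval v ((bind₁ fun i => X i + C (θ i)) f)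
        = MvPolynomial.eval (fun i => MvPolynomial.eval v (X i + C (θ i))) f :=
      eval₂Hom_bind₁ (RingHom.id ℝ) v _ f
    rw [h]
    have h2 : (fun i => MvPolynomial.eval v (X i + C (θ i))) = v + θ := by
      funext i; simp
    rw [h2]
  -- g vanishes on Θ - θ
  have hgzero : ∀ x ∈ Θ, MvPolynomial.eval (x - θ) g = 0 := by
    intro x hx
    rw [hgval, sub_add_cancel]
    exact hvanish x hx
  -- d ≥ 1
  have hd1 : 1 ≤ d := by
    by_contra h
    push_neg at h
    interval_cases d
    apply hd
    have h0 : MvPolynomial.eval (0 : Fin k → ℝ) g = 0 := by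
      have := hgzero θ hθ
      simpa using this
    rw [eval_zero, constantCoeff_eq] at h0
    rw [homogeneousComponent_zero, h0, map_zero]
  rintro τ ⟨α, p, hα, hpΘ, hp, hlim⟩
  set N := g.totalDegree with hN
  by_cases hτ : τ = 0
  · subst hτ
    have : (homogeneousComponent d g).IsHomogeneous d := homogeneousComponent_isHomogeneous d g
    have h := eval_smul_isHomogeneous this 0 0
    simpa [zero_pow (by omega : d ≠ 0)] using h
  -- α tends to infinity
  have hv0 : Tendsto (fun n => p n - θ) atTop (𝓝 0) := by
    simpa using hp.sub (tendsto_const_nhds (x := θ))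
  have hαtop : Tendsto α atTop atTop := by
    have hτn : 0 < ‖τ‖ := norm_pos_iff.mpr hτ
    rw [tendsto_atTop]
    intro M
    have hM : 0 < max M 1 := lt_max_of_lt_right one_pos
    have h1 : ∀ᶠ n in atTop, ‖τ‖ / 2 < ‖α n • (p n - θ)‖ :=
      hlim.norm.eventually_const_lt (by linarith)
    have h2 : ∀ᶠ n in atTop, ‖p n - θ‖ < ‖τ‖ / 2 / (max M 1) := by
      have := hv0.norm
      simp only [norm_zero] at this
      exact this.eventually_lt_const (by positivity)
    filter_upwards [h1, h2] with n h1 h2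
    have hαn := hα n
    have : ‖α n • (p n - θ)‖ = α n * ‖p n - θ‖ := by
      rw [norm_smul, Real.norm_of_nonneg hαn.le]
    rw [this] at h1
    have hne : ‖p n - θ‖ > 0 := by
      by_contra h
      push_neg at h
      have : ‖p n - θ‖ = 0 := le_antisymm h (norm_nonneg _)
      rw [this, mul_zero] at h1
      linarith
    set ε := ‖τ‖ / 2 / (max M 1) with hε
    have hεpos : 0 < ε := by positivity
    have hεM : ε * max M 1 = ‖τ‖ / 2 := div_mul_cancel₀ _ hM.ne'
    have hMle : max M 1 < α n := by
      nlinarith [mul_lt_mul_of_pos_left h2 hαn]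
    exact le_of_lt (lt_of_le_of_lt (le_max_left M 1) hMle)
  -- the zero identity
  have hkey : ∀ n, ∑ e ∈ Finset.range (N + 1),
      (α n) ^ d * MvPolynomial.eval (p n - θ) (homogeneousComponent e g) = 0 := by
    intro n
    rw [← Finset.mul_sum]
    have : ∑ e ∈ Finset.range (N + 1),
        MvPolynomial.eval (p n - θ) (homogeneousComponent e g)
        = MvPolynomial.eval (p n - θ) g := by
      rw [← map_sum, sum_homogeneousComponent]
    rw [this, hgzero _ (hpΘ n), mul_zero]
  -- limits of each term
  have hterm : ∀ e ∈ Finset.range (N + 1), Tendsto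
      (fun n => (α n) ^ d * MvPolynomial.eval (p n - θ) (homogeneousComponent e g))
      atTop (𝓝 (if e = d then MvPolynomial.eval τ (homogeneousComponent d g) else 0)) := by
    intro e _
    have hhom : (homogeneousComponent e g).IsHomogeneous e :=
      homogeneousComponent_isHomogeneous e g
    have heq : ∀ n, (α n) ^ d * MvPolynomial.eval (p n - θ) (homogeneousComponent e g)
        = (α n)⁻¹ ^ (e - d) * (if e < d then 0 else 1) *
          MvPolynomial.eval (α n • (p n - θ)) (homogeneousComponent e g) := by
      intro n
      rw [eval_smul_isHomogeneous hhom]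
      rcases lt_or_ge e d with h | h
      · simp [hmin e h]
      · have hαn := (hα n).ne'
        rw [if_neg (not_lt.mpr h)]
        field_simp
        obtain ⟨m, rfl⟩ : ∃ m, e = d + m := ⟨e - d, by omega⟩
        have hm : α n ^ m ≠ 0 := pow_ne_zero _ hαn
        rw [Nat.add_sub_cancel_left, pow_add, one_div, inv_pow, mul_assoc,
          mul_comm (α n ^ d) (α n ^ m), inv_mul_cancel_left₀ hm, mul_comm]
    simp_rw [heq]
    have hevallim : Tendsto (fun n => MvPolynomial.eval (α n • (p n - θ))
        (homogeneousComponent e g)) atTop (𝓝 (MvPolynomial.eval τ (homogeneousComponent e g))) :=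
      (MvPolynomial.continuous_eval (homogeneousComponent e g)).continuousAt.tendsto.comp hlim
    rcases lt_trichotomy e d with h | h | h
    · rw [if_neg (Nat.ne_of_lt h)]
      simpa [h] using (tendsto_const_nhds (α := ℝ) (x := (0:ℝ))).mul hevallim |>.congr
        (fun n => by simp [h])
    · subst h
      rw [if_pos rfl]
      have : ∀ n, (α n)⁻¹ ^ (e - e) * (if e < e then 0 else 1) *
          MvPolynomial.eval (α n • (p n - θ)) (homogeneousComponent e g)
          = MvPolynomial.eval (α n • (p n - θ)) (homogeneousComponent e g) := by
        intro n; simp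
      simp_rw [this]
      exact hevallim
    · rw [if_neg (Nat.ne_of_gt h)]
      have hinv : Tendsto (fun n => (α n)⁻¹ ^ (e - d)) atTop (𝓝 0) := by
        have : Tendsto (fun n => (α n)⁻¹) atTop (𝓝 0) := hαtop.inv_tendsto_atTop
        have := this.pow (e - d)
        simpa [zero_pow (by omega : e - d ≠ 0)] using this
      have : Tendsto (fun n => (α n)⁻¹ ^ (e - d) * (if e < d then 0 else 1) *
          MvPolynomial.eval (α n • (p n - θ)) (homogeneousComponent e g)) atTop
          (𝓝 (0 * (if e < d then 0 else 1) * MvPolynomial.eval τ (homogeneousComponent e g))) :=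
        (hinv.mul tendsto_const_nhds).mul hevallim
      simpa using this
  -- sum up
  have hsum : Tendsto (fun n => ∑ e ∈ Finset.range (N + 1),
      (α n) ^ d * MvPolynomial.eval (p n - θ) (homogeneousComponent e g)) atTop
      (𝓝 (∑ e ∈ Finset.range (N + 1),
        (if e = d then MvPolynomial.eval τ (homogeneousComponent d g) else 0))) :=
    tendsto_finset_sum _ hterm
  simp_rw [hkey] at hsum
  have hz := tendsto_nhds_unique tendsto_const_nhds hsum
  rw [Finset.sum_ite_eq' (Finset.range (N + 1)) d] at hz
  by_cases hdN : d ∈ Finset.range (N + 1)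
  · rw [if_pos hdN] at hz
    exact hz.symm
  ·
    exfalso
    apply hd
    apply homogeneousComponent_eq_zero
    simp only [Finset.mem_range, not_lt] at hdN
    omega
end

section
/- Let Θ₀ = {μ ∈ ℝ² : μ₂² = μ₁³} be the cuspidal cubic. The tangent cone of Θ₀ at the origin is the half-ray {μ ∈ ℝ² : μ₁ ≥ 0, μ₂ = 0}. -/
open Filter Topology

theorem tangentCone_cuspidalCubic :
    tangentConeAt' {μ : Fin 2 → ℝ | (μ 1) ^ 2 = (μ 0) ^ 3} (0 : Fin 2 → ℝ) =
      {μ : Fin 2 → ℝ | 0 ≤ μ 0 ∧ μ 1 = 0} := by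
  ext y
  constructor
  · rintro ⟨α, p, hα, hmem, hp0, hlim⟩
    -- component limits
    have P0 : Tendsto (fun n => p n 0) atTop (𝓝 0) := by
      have := tendsto_pi_nhds.1 hp0 0
      simpa using this
    have A0 : Tendsto (fun n => α n * p n 0) atTop (𝓝 (y 0)) := by
      have := tendsto_pi_nhds.1 hlim 0
      simpa [Pi.smul_apply, smul_eq_mul] using this
    have A1 : Tendsto (fun n => α n * p n 1) atTop (𝓝 (y 1)) := by
      have := tendsto_pi_nhds.1 hlim 1
      simpa [Pi.smul_apply, smul_eq_mul] using this
    have hpos : ∀ n, 0 ≤ p n 0 := by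
      intro n
      have h := hmem n
      have h3 : (0:ℝ) ≤ (p n 0) ^ 3 := h ▸ sq_nonneg _
      exact (Odd.pow_nonneg_iff (by decide)).1 h3
    constructor
    · refine ge_of_tendsto A0 (Eventually.of_forall fun n => ?_)
      exact mul_nonneg (hα n).le (hpos n)
    · have key : ∀ n, (α n * p n 1) ^ 2 = (α n * p n 0) ^ 2 * p n 0 := by
        intro n
        have h := hmem n
        rw [mul_pow, h]; ring
      have L1 : Tendsto (fun n => (α n * p n 1) ^ 2) atTop (𝓝 ((y 1) ^ 2)) := A1.pow 2
      have L2 : Tendsto (fun n => (α n * p n 1) ^ 2) atTop (𝓝 ((y 0) ^ 2 * 0)) := by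
        refine Tendsto.congr (fun n => (key n).symm) ((A0.pow 2).mul P0)
      have := tendsto_nhds_unique L1 L2
      have : (y 1) ^ 2 = 0 := by simpa using this
      exact pow_eq_zero_iff (by norm_num) |>.1 this
  · rintro ⟨h0, h1⟩
    refine ⟨fun n => (n : ℝ) + 1, fun n => ![y 0 / ((n:ℝ)+1),
      (y 0 / ((n:ℝ)+1)) * Real.sqrt (y 0 / ((n:ℝ)+1))], fun n => by positivity, ?_, ?_, ?_⟩
    · intro n
      have hn : (0:ℝ) ≤ y 0 / ((n:ℝ)+1) := div_nonneg h0 (by positivity)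
      simp only [Set.mem_setOf_eq, Matrix.cons_val_one, Matrix.head_cons, Matrix.cons_val_zero]
      rw [mul_pow, Real.sq_sqrt hn]; ring
    · rw [tendsto_pi_nhds]
      have hdiv : Tendsto (fun n : ℕ => y 0 / ((n:ℝ)+1)) atTop (𝓝 0) := by
        apply Tendsto.div_atTop tendsto_const_nhds
        exact tendsto_atTop_add_const_right _ 1 tendsto_natCast_atTop_atTop
      intro i
      fin_cases i
      · simpa using hdiv
      · have : Tendsto (fun n : ℕ => (y 0 / ((n:ℝ)+1)) * Real.sqrt (y 0 / ((n:ℝ)+1)))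
            atTop (𝓝 0) := by
          have hsq : Tendsto (fun n : ℕ => Real.sqrt (y 0 / ((n:ℝ)+1))) atTop (𝓝 0) := by
            have := (Real.continuous_sqrt.tendsto 0).comp hdiv
            simpa [Function.comp_def] using this
          simpa using hdiv.mul hsq
        simpa using this
    · rw [tendsto_pi_nhds]
      intro i
      fin_cases i
      · have : ∀ n : ℕ, (((n:ℝ)+1) • (![y 0 / ((n:ℝ)+1),
            (y 0 / ((n:ℝ)+1)) * Real.sqrt (y 0 / ((n:ℝ)+1))] - (0 : Fin 2 → ℝ))) 0 = y 0 := by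
          intro n
          have hn : ((n:ℝ)+1) ≠ 0 := by positivity
          simp [Pi.smul_apply, smul_eq_mul, mul_div_cancel₀, hn]
        exact Tendsto.congr (fun n => (this n).symm) tendsto_const_nhds
      · have heq : ∀ n : ℕ, (((n:ℝ)+1) • (![y 0 / ((n:ℝ)+1),
            (y 0 / ((n:ℝ)+1)) * Real.sqrt (y 0 / ((n:ℝ)+1))] - (0 : Fin 2 → ℝ))) 1
            = y 0 * Real.sqrt (y 0 / ((n:ℝ)+1)) := by
          intro n
          have hn : ((n:ℝ)+1) ≠ 0 := by positivity
          simp only [Pi.smul_apply, Pi.sub_apply, Pi.zero_apply, sub_zero, smul_eq_mul,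
            Matrix.cons_val_one, Matrix.head_cons, Matrix.cons_val_zero]
          rw [← mul_assoc]
          congr 1
          field_simp
        have hdiv : Tendsto (fun n : ℕ => y 0 / ((n:ℝ)+1)) atTop (𝓝 0) := by
          apply Tendsto.div_atTop tendsto_const_nhds
          exact tendsto_atTop_add_const_right _ 1 tendsto_natCast_atTop_atTop
        have hsq : Tendsto (fun n : ℕ => Real.sqrt (y 0 / ((n:ℝ)+1))) atTop (𝓝 0) := by
          have := (Real.continuous_sqrt.tendsto 0).comp hdiv
          simpa [Function.comp_def] using this
        have : Tendsto (fun n : ℕ => y 0 * Real.sqrt (y 0 / ((n:ℝ)+1))) atTop (𝓝 (y 1)) := by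
          rw [h1]
          simpa using (tendsto_const_nhds (x := y 0)).mul hsq
        exact this.congr fun n => (heq n).symm
end

section
/- Let F_{m,1} = {Δ + ΓΓᵗ : Δ diagonal positive definite m×m, Γ ∈ ℝ^m} with m ≥ 4, and let Σ ∈ F_{m,1} be diagonal. Then the tangent cone T_{F_{m,1}}(Σ) equals the topological closure of the cone T_{m,1} = {Δ + ΓΓᵗ : Δ any diagonal symmetric m×m matrix, Γ ∈ ℝ^m}. -/
open Filter Topology

/-- The one-factor analysis parameter space `F_{m,1}`. -/
def oneFactorSet (m : ℕ) : Set (Matrix (Fin m) (Fin m) ℝ) :=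
  {S | ∃ δ Γ : Fin m → ℝ, (∀ i, 0 < δ i) ∧ S = Matrix.diagonal δ + Matrix.vecMulVec Γ Γ}

/-- The cone `T_{m,1}` with arbitrary (real) diagonal part. -/
def oneFactorCone (m : ℕ) : Set (Matrix (Fin m) (Fin m) ℝ) :=
  {S | ∃ δ Γ : Fin m → ℝ, S = Matrix.diagonal δ + Matrix.vecMulVec Γ Γ}

/-! Since `S₀ = diagonal δ₀` with `δ₀ > 0`, every difference `θ - S₀` with `θ ∈ F_{m,1}` is again
diagonal plus rank one, a form stable under positive scaling; hence the tangent cone lies in the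
closure of `T_{m,1}`. Conversely, for `y = diagonal δ + ΓΓᵀ` the point `S₀ + t • y` stays in
`F_{m,1}` for small `t > 0`, because its diagonal part `δ₀ + t • δ` stays positive; choosing steps
`t n → 0` along a sequence of `T_{m,1}` converging to `y` then reaches the closure. -/

instance Matrix.firstCountableTopology {m n α : Type*} [Countable m] [Countable n]
    [TopologicalSpace α] [FirstCountableTopology α] : FirstCountableTopology (Matrix m n α) :=
  inferInstanceAs (FirstCountableTopology (m → n → α))

section TangentCone

variable {E : Type*} [AddCommGroup E] [Module ℝ E] [TopologicalSpace E]

theorem tangentConeAt'_subset_closure {s C : Set E} {x : E}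
    (h : ∀ p ∈ s, ∀ α : ℝ, 0 < α → α • (p - x) ∈ C) : tangentConeAt' s x ⊆ closure C :=
  fun _ ⟨α, p, hα, hp, _, hlim⟩ =>
    mem_closure_of_tendsto hlim (Eventually.of_forall fun n => h (p n) (hp n) (α n) (hα n))

theorem closure_subset_tangentConeAt' [IsTopologicalAddGroup E] [ContinuousSMul ℝ E]
    [FirstCountableTopology E] {s C : Set E} {x : E}
    (h : ∀ y ∈ C, ∀ᶠ t in 𝓝[>] (0 : ℝ), x + t • y ∈ s) : closure C ⊆ tangentConeAt' s x := by
  intro y hy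
  obtain ⟨q, hqC, hqy⟩ := mem_closure_iff_seq_limit.1 hy
  -- With `p n = x + t n • q n` and `t n → 0`, the rescaled differences are exactly `q n`.
  have hstep : ∀ n : ℕ, ∃ t, x + t • q n ∈ s ∧ t ∈ Set.Ioo (0 : ℝ) (1 / (n + 1)) := fun n =>
    ((h (q n) (hqC n)).and (Ioo_mem_nhdsGT (by positivity))).exists
  choose t hts ht using hstep
  have ht0 : Tendsto t atTop (𝓝 0) :=
    squeeze_zero (fun n => (ht n).1.le) (fun n => (ht n).2.le)
      tendsto_one_div_add_atTop_nhds_zero_nat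
  refine ⟨fun n => (t n)⁻¹, fun n => x + t n • q n, fun n => inv_pos.2 (ht n).1, hts, ?_, ?_⟩
  · simpa using tendsto_const_nhds.add (ht0.smul hqy)
  · have hscale : ∀ n, (t n)⁻¹ • (x + t n • q n - x) = q n := fun n => by
      rw [add_sub_cancel_left, inv_smul_smul₀ (ht n).1.ne']
    simpa only [hscale] using hqy

end TangentCone

section OneFactor

variable {m : ℕ}

theorem smul_mem_oneFactorCone {c : ℝ} (hc : 0 ≤ c) {S : Matrix (Fin m) (Fin m) ℝ}
    (hS : S ∈ oneFactorCone m) : c • S ∈ oneFactorCone m := by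
  obtain ⟨δ, Γ, rfl⟩ := hS
  refine ⟨c • δ, √c • Γ, ?_⟩
  rw [Matrix.smul_vecMulVec, Matrix.vecMulVec_smul, smul_smul, Real.mul_self_sqrt hc,
    smul_add, ← Matrix.diagonal_smul]

theorem sub_diagonal_mem_oneFactorCone {S : Matrix (Fin m) (Fin m) ℝ}
    (hS : S ∈ oneFactorSet m) (δ₀ : Fin m → ℝ) : S - Matrix.diagonal δ₀ ∈ oneFactorCone m := by
  obtain ⟨δ, Γ, -, rfl⟩ := hS
  exact ⟨fun i => δ i - δ₀ i, Γ, by rw [← Matrix.diagonal_sub]; abel⟩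

theorem diag_pos_of_mem_oneFactorSet {S : Matrix (Fin m) (Fin m) ℝ}
    (hS : S ∈ oneFactorSet m) (i : Fin m) : 0 < S i i := by
  obtain ⟨δ, Γ, hδ, rfl⟩ := hS
  simpa [Matrix.vecMulVec_apply] using add_pos_of_pos_of_nonneg (hδ i) (mul_self_nonneg (Γ i))

theorem eventually_diagonal_add_smul_mem_oneFactorSet {δ₀ : Fin m → ℝ} (hδ₀ : ∀ i, 0 < δ₀ i)
    {y : Matrix (Fin m) (Fin m) ℝ} (hy : y ∈ oneFactorCone m) :
    ∀ᶠ t in 𝓝[>] (0 : ℝ), Matrix.diagonal δ₀ + t • y ∈ oneFactorSet m := by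
  obtain ⟨δ, Γ, rfl⟩ := hy
  have hpos : ∀ᶠ t in 𝓝 (0 : ℝ), ∀ i, 0 < δ₀ i + t * δ i := eventually_all.2 fun i =>
    (tendsto_const_nhds.add (tendsto_id.mul_const (δ i))).eventually_const_lt (by simpa using hδ₀ i)
  filter_upwards [nhdsWithin_le_nhds hpos, self_mem_nhdsWithin] with t ht (htpos : 0 < t)
  refine ⟨δ₀ + t • δ, √t • Γ, ht, ?_⟩
  rw [Matrix.smul_vecMulVec, Matrix.vecMulVec_smul, smul_smul, Real.mul_self_sqrt htpos.le,
    smul_add, ← Matrix.diagonal_smul, ← add_assoc, Matrix.diagonal_add]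
  rfl

end OneFactor

theorem tangentCone_oneFactor_diagonal_general (m : ℕ)
    (S₀ : Matrix (Fin m) (Fin m) ℝ) (hS : S₀ ∈ oneFactorSet m)
    (hdiag : ∀ i j, i ≠ j → S₀ i j = 0) :
    tangentConeAt' (oneFactorSet m) S₀ = closure (oneFactorCone m) := by
  have hS₀ : Matrix.diagonal S₀.diag = S₀ := (Matrix.isDiag_iff_diagonal_diag S₀).1 hdiag
  refine subset_antisymm (tangentConeAt'_subset_closure fun p hp α hα => ?_)
    (closure_subset_tangentConeAt' fun y hy => ?_)
  · rw [← hS₀]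
    exact smul_mem_oneFactorCone hα.le (sub_diagonal_mem_oneFactorCone hp _)
  · rw [← hS₀]
    exact eventually_diagonal_add_smul_mem_oneFactorSet (diag_pos_of_mem_oneFactorSet hS) hy

theorem tangentCone_oneFactor_diagonal (m : ℕ) (hm : 4 ≤ m)
    (S₀ : Matrix (Fin m) (Fin m) ℝ) (hS : S₀ ∈ oneFactorSet m)
    (hdiag : ∀ i j, i ≠ j → S₀ i j = 0) :
    tangentConeAt' (oneFactorSet m) S₀ = closure (oneFactorCone m) :=
  tangentCone_oneFactor_diagonal_general m S₀ hS hdiag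
end

section
/- Let m ≥ 4 and let Σ = Δ + ΓΓᵗ ∈ F_{m,1} where Δ is diagonal positive definite and Γ = (γ₁,…,γ_m)ᵗ has at least three nonzero entries, say γ₁, γ₂, γ₃ ≠ 0. Then the Jacobian of the parametrization map f : (0,∞)^m × ℝ^m → Sym(m), (δ, Γ) ↦ diag(δ) + ΓΓᵗ, has full rank 2m at (δ, Γ). -/
/-- The parametrization map of the one-factor model, `(δ, Γ) ↦ diag(δ) + Γ Γᵗ`,
viewed as a map between (finite-dimensional) normed spaces. -/
def factorParam (m : ℕ) :
    ((Fin m → ℝ) × (Fin m → ℝ)) → (Fin m → Fin m → ℝ) :=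
  fun p i j => (if i = j then p.1 i else 0) + p.2 i * p.2 j

noncomputable def factorDeriv (m : ℕ) (Γ : Fin m → ℝ) :
    ((Fin m → ℝ) × (Fin m → ℝ)) →L[ℝ] (Fin m → Fin m → ℝ) :=
  ContinuousLinearMap.pi fun i => ContinuousLinearMap.pi fun j =>
    (if i = j then (ContinuousLinearMap.proj i).comp
        (ContinuousLinearMap.fst ℝ (Fin m → ℝ) (Fin m → ℝ)) else 0)
    + (Γ i • (ContinuousLinearMap.proj j).comp
        (ContinuousLinearMap.snd ℝ (Fin m → ℝ) (Fin m → ℝ))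
      + Γ j • (ContinuousLinearMap.proj i).comp
        (ContinuousLinearMap.snd ℝ (Fin m → ℝ) (Fin m → ℝ)))

lemma factorDeriv_apply (m : ℕ) (Γ : Fin m → ℝ) (q : (Fin m → ℝ) × (Fin m → ℝ))
    (i j : Fin m) :
    factorDeriv m Γ q i j = (if i = j then q.1 i else 0) + (Γ i * q.2 j + Γ j * q.2 i) := by
  simp [factorDeriv, apply_ite (fun (L : ((Fin m → ℝ) × (Fin m → ℝ)) →L[ℝ] ℝ) => L q)]

lemma factorParam_hasFDerivAt (m : ℕ) (δ Γ : Fin m → ℝ) :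
    HasFDerivAt (factorParam m) (factorDeriv m Γ) (δ, Γ) := by
  rw [factorDeriv, hasFDerivAt_pi]
  intro i
  rw [hasFDerivAt_pi]
  intro j
  have h2 : HasFDerivAt (fun p : (Fin m → ℝ) × (Fin m → ℝ) => p.2 i * p.2 j)
      (Γ i • (ContinuousLinearMap.proj j).comp
          (ContinuousLinearMap.snd ℝ (Fin m → ℝ) (Fin m → ℝ))
        + Γ j • (ContinuousLinearMap.proj i).comp
          (ContinuousLinearMap.snd ℝ (Fin m → ℝ) (Fin m → ℝ))) (δ, Γ) := by
    simpa [Pi.mul_def] using ((((ContinuousLinearMap.proj i).comp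
        (ContinuousLinearMap.snd ℝ (Fin m → ℝ) (Fin m → ℝ))).hasFDerivAt (x := (δ, Γ))).mul
      (((ContinuousLinearMap.proj j).comp
        (ContinuousLinearMap.snd ℝ (Fin m → ℝ) (Fin m → ℝ))).hasFDerivAt (x := (δ, Γ))))
  have h1 : HasFDerivAt (fun p : (Fin m → ℝ) × (Fin m → ℝ) => if i = j then p.1 i else 0)
      (if i = j then (ContinuousLinearMap.proj i).comp
          (ContinuousLinearMap.fst ℝ (Fin m → ℝ) (Fin m → ℝ)) else 0) (δ, Γ) := by
    by_cases h : i = j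
    · simp only [h, if_true]
      exact ((ContinuousLinearMap.proj j).comp
        (ContinuousLinearMap.fst ℝ (Fin m → ℝ) (Fin m → ℝ))).hasFDerivAt
    · simp only [h, if_false]
      exact hasFDerivAt_const 0 _
  exact h1.add h2

theorem factorParam_jacobian_full_rank (m : ℕ) (hm : 4 ≤ m)
    (δ Γ : Fin m → ℝ) (hδ : ∀ i, 0 < δ i)
    (h3 : ∃ i j k : Fin m, i ≠ j ∧ i ≠ k ∧ j ≠ k ∧ Γ i ≠ 0 ∧ Γ j ≠ 0 ∧ Γ k ≠ 0) :
    Function.Injective ⇑(fderiv ℝ (factorParam m) (δ, Γ)) := by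
  rw [(factorParam_hasFDerivAt m δ Γ).fderiv]
  obtain ⟨a, b, c, hab, hac, hbc, ha, hb, hc⟩ := h3
  -- key: any element of the kernel is zero
  have key : ∀ q : (Fin m → ℝ) × (Fin m → ℝ), factorDeriv m Γ q = 0 → q = 0 := by
    intro q hq
    have hE : ∀ i j, (if i = j then q.1 i else 0) + (Γ i * q.2 j + Γ j * q.2 i) = 0 := by
      intro i j
      rw [← factorDeriv_apply m Γ q i j, hq]
      rfl
    have off : ∀ i j, i ≠ j → Γ i * q.2 j + Γ j * q.2 i = 0 := by
      intro i j hij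
      have := hE i j
      simpa [hij] using this
    -- a lemma: for distinct x y z with Γ nonzero, q.2 x = 0
    have zero3 : ∀ x y z : Fin m, x ≠ y → x ≠ z → y ≠ z →
        Γ x ≠ 0 → Γ y ≠ 0 → Γ z ≠ 0 → q.2 x = 0 := by
      intro x y z hxy hxz hyz hx hy hz
      have e1 := off x y hxy
      have e2 := off x z hxz
      have e3 := off y z hyz
      have h2 : 2 * (q.2 x * (Γ y * Γ z)) = 0 := by
        linear_combination Γ z * e1 + Γ y * e2 - Γ x * e3
      have hyzne : Γ y * Γ z ≠ 0 := mul_ne_zero hy hz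
      have := mul_eq_zero.mp h2
      rcases this with h | h
      · norm_num at h
      · rcases mul_eq_zero.mp h with h | h
        · exact h
        · exact absurd h hyzne
    have hGa : q.2 a = 0 := zero3 a b c hab hac hbc ha hb hc
    have hGb : q.2 b = 0 := zero3 b a c hab.symm hbc hac hb ha hc
    have hGall : ∀ i, q.2 i = 0 := by
      intro i
      by_cases hia : i = a
      · rw [hia]; exact hGa
      by_cases hib : i = b
      · rw [hib]; exact hGb
      · have e := off i a hia
        rw [hGa] at e
        have : Γ a * q.2 i = 0 := by linarith [e]
        rcases mul_eq_zero.mp this with h | h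
        · exact absurd h ha
        · exact h
    have hdall : ∀ i, q.1 i = 0 := by
      intro i
      have := hE i i
      simp [hGall i] at this
      exact this
    ext i
    · exact hdall i
    · exact hGall i
  intro x y hxy
  have : factorDeriv m Γ (x - y) = 0 := by
    rw [map_sub, hxy, sub_self]
  have := key _ this
  exact sub_eq_zero.mp this
end

section
/- Let m ≥ 4. The m×m submatrix of partial derivatives ∂σ_{ij}/∂γ_k (where σ = ΓΓᵗ + diag(δ)) for the index pairs (i,j) ∈ {(1,2),(1,3),…,(1,m),(2,3)} has determinant equal to ±2γ₁^{m−2}γ₂γ₃; in particular it is nonzero whenever γ₁, γ₂, γ₃ ≠ 0. -/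
/-- The m×m submatrix of partial derivatives ∂σ_{ij}/∂γ_k for index pairs
(using 0-based indices) (0,1), (0,2), …, (0,m−1), (1,2), where
σ_{ij} = δ_i·[i=j] + γ_iγ_j, so ∂σ_{ij}/∂γ_k = γ_j·[k=i] + γ_i·[k=j] for i < j. -/
def derivSubmatrix (n : ℕ) (γ : Fin (n + 4) → ℝ) : Matrix (Fin (n + 4)) (Fin (n + 4)) ℝ :=
  Matrix.of fun r k =>
    if hr : (r : ℕ) = n + 3 then
      -- last row corresponds to the pair (1, 2)
      (if k = (1 : Fin (n + 4)) then γ 2 else 0) + (if k = (2 : Fin (n + 4)) then γ 1 else 0)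
    else
      -- row r corresponds to the pair (0, r + 1)
      (if k = (0 : Fin (n + 4)) then γ ⟨(r : ℕ) + 1, by have := r.isLt; omega⟩ else 0) +
        (if (k : ℕ) = (r : ℕ) + 1 then γ 0 else 0)

set_option linter.unreachableTactic false
set_option linter.unusedTactic false
set_option linter.unnecessarySeqFocus false

lemma derivSubmatrix_det_base (γ : Fin 4 → ℝ) :
    (derivSubmatrix 0 γ).det = 2 * γ 0 ^ 2 * γ 1 * γ 2 := by
  have h : derivSubmatrix 0 γ =
      !![γ 1, γ 0, 0, 0; γ 2, 0, γ 0, 0; γ 3, 0, 0, γ 0; 0, γ 2, γ 1, 0] := by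
    ext r k
    fin_cases r <;> fin_cases k <;>
      norm_num [derivSubmatrix, Fin.ext_iff, -Fin.val_eq_zero_iff, show ((3:Fin 4):ℕ) = 3 from rfl] <;> congr 1
  rw [h]
  simp [Matrix.det_succ_row_zero, Fin.sum_univ_succ]; simp only [Fin.succAbove, Fin.lt_def]; simp
  ring

lemma derivSubmatrix_det_step (n : ℕ) (γ : Fin (n + 5) → ℝ) :
    (derivSubmatrix (n+1) γ).det = -(γ 0) * (derivSubmatrix n (γ ∘ Fin.castSucc)).det := by
  rw [Matrix.det_succ_column (derivSubmatrix (n+1) γ) (Fin.last (n+4))]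
  rw [Finset.sum_eq_single (⟨n+3, by omega⟩ : Fin (n+5))]
  · have hA : (derivSubmatrix (n+1) γ) ⟨n+3, by omega⟩ (Fin.last (n+4)) = γ 0 := by
      simp [derivSubmatrix, Fin.last, Fin.ext_iff, -Fin.val_eq_zero_iff]
    rw [hA]
    have hsub : (derivSubmatrix (n+1) γ).submatrix
        (Fin.succAbove ⟨n+3, by omega⟩) (Fin.succAbove (Fin.last (n+4))) =
        derivSubmatrix n (γ ∘ Fin.castSucc) := by
      ext r k
      simp only [Matrix.submatrix_apply, Fin.succAbove_last, derivSubmatrix, Matrix.of_apply]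
      rcases Nat.lt_or_ge (r : ℕ) (n+3) with hr | hr
      · have h1 : (Fin.succAbove ⟨n+3, by omega⟩ r : ℕ) = (r : ℕ) := by
          rw [Fin.succAbove]
          simp [Fin.lt_def, hr, Fin.castSucc, Fin.castAdd, Fin.castLE]
        rw [dif_neg (by omega), dif_neg (by omega)]
        simp only [h1, Function.comp_apply]
        congr 1 <;>
          first
            | exact if_congr (by simp [Fin.ext_iff, -Fin.val_eq_zero_iff]) rfl rfl
            | exact if_congr (by simp) (congrArg γ (by ext; simp)) rfl
      · have hr3 : (r : ℕ) = n + 3 := by omega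
        have h1 : (Fin.succAbove ⟨n+3, by omega⟩ r : ℕ) = (r : ℕ) + 1 := by
          rw [Fin.succAbove]
          simp [Fin.lt_def, hr3, Fin.succ]
        rw [dif_pos (by omega), dif_pos hr3]
        simp only [Function.comp_apply]
        congr 1 <;>
          exact if_congr (by simp [Fin.ext_iff, Nat.mod_eq_of_lt (show 2 < n+4 by omega), Nat.mod_eq_of_lt (show 2 < n+4+1 by omega), Nat.mod_eq_of_lt (show 2 < n+1+4 by omega)]) (congrArg γ (by ext; simp [Nat.mod_eq_of_lt (show 2 < n+4 by omega), Nat.mod_eq_of_lt (show 2 < n+4+1 by omega), Nat.mod_eq_of_lt (show 2 < n+1+4 by omega)])) rfl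
    rw [hsub]
    have hv : ((⟨n+3, by omega⟩ : Fin (n+5)) : ℕ) + ((Fin.last (n+4)) : ℕ) = 2*n + 7 := by
      simp [Fin.last]; omega
    rw [hv]
    have hs : ((-1:ℝ))^(2*n+7) = -1 := by
      rw [show 2*n+7 = 2*(n+3)+1 by ring, pow_succ, pow_mul]
      norm_num
    rw [hs]; ring
  · intro i _ hne
    have hi : (i : ℕ) ≠ n + 3 := fun h => hne (Fin.ext h)
    have hA : (derivSubmatrix (n+1) γ) i (Fin.last (n+4)) = 0 := by
      rcases Nat.lt_or_ge (i:ℕ) (n+4) with h | h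
      · simp only [derivSubmatrix, Matrix.of_apply]
        rw [dif_neg (by omega)]
        have := i.isLt
        simp [Fin.ext_iff, Fin.last]
        intro h'; omega
      · have : (i:ℕ) = n + 4 := by have := i.isLt; omega
        simp only [derivSubmatrix, Matrix.of_apply]
        rw [dif_pos (by omega)]
        simp [Fin.ext_iff, Fin.last, Nat.mod_eq_of_lt (show 2 < n+4 by omega), Nat.mod_eq_of_lt (show 2 < n+4+1 by omega), Nat.mod_eq_of_lt (show 2 < n+1+4 by omega)]
    rw [hA]; ring
  · intro h
    simp at h

lemma derivSubmatrix_det_eq (n : ℕ) (γ : Fin (n + 4) → ℝ) :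
    (derivSubmatrix n γ).det = (-1)^n * (2 * γ 0 ^ (n + 2) * γ 1 * γ 2) := by
  induction n with
  | zero => simpa using derivSubmatrix_det_base γ
  | succ m ih =>
    rw [derivSubmatrix_det_step m γ, ih (γ ∘ Fin.castSucc)]
    have h0 : (γ ∘ Fin.castSucc) 0 = γ 0 := congrArg γ (by ext; simp)
    have h1 : (γ ∘ Fin.castSucc) 1 = γ 1 := congrArg γ (by ext; simp)
    have h2 : (γ ∘ Fin.castSucc) 2 = γ 2 := congrArg γ (by ext; simp [Nat.mod_eq_of_lt (show 2 < m+4 by omega), Nat.mod_eq_of_lt (show 2 < m+4+1 by omega), Nat.mod_eq_of_lt (show 2 < m+1+4 by omega)])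
    rw [h0, h1, h2]
    ring

theorem derivSubmatrix_det (n : ℕ) (γ : Fin (n + 4) → ℝ) :
    ((derivSubmatrix n γ).det = 2 * γ 0 ^ (n + 2) * γ 1 * γ 2 ∨
      (derivSubmatrix n γ).det = -(2 * γ 0 ^ (n + 2) * γ 1 * γ 2)) ∧
    (γ 0 ≠ 0 → γ 1 ≠ 0 → γ 2 ≠ 0 → (derivSubmatrix n γ).det ≠ 0) := by
  have h := derivSubmatrix_det_eq n γ
  constructor
  · rcases Nat.even_or_odd n with he | ho
    · left; rw [h, he.neg_one_pow]; ring
    · right; rw [h, ho.neg_one_pow]; ring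
  · intro h0 h1 h2
    rw [h]
    have : ((-1:ℝ))^n ≠ 0 := by positivity
    positivity
end

section
/- Let m ≥ 4 and let Σ ∈ F_{m,1} have exactly one nonzero off-diagonal entry σ₁₂ with 1 ≤ 1 < 2 ≤ m and σ₁₂ > 0. Then the tangent cone T_{F_{m,1}}(Σ) is the set of symmetric matrices S = (s_{gh}) such that: (a) s_{gh} = 0 for all 3 ≤ g < h ≤ m, (b) the 2×(m−2) submatrix S_{{1,2}×{3,…,m}} has rank at most one, and (c) there exists η ∈ [σ₁₂/σ₁₁, σ₂₂/σ₁₂] with s_{2g} = η·s_{1g} for all g ≥ 3. -/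
open Filter Topology

private lemma aux_sq_lower {x y c q : ℝ} (hc : 0 < c) (h1 : c < x * y) (h2 : y * y < q) :
    c * c / q < x * x := by
  have hq : 0 < q := lt_of_le_of_lt (mul_self_nonneg y) h2
  rw [div_lt_iff₀ hq]
  nlinarith [mul_self_nonneg x, mul_self_nonneg y]

private lemma aux_bdd' {x y z A ρ : ℝ} (hρ : 0 < ρ) (hx : ρ < x * x) :
    |A * (y * z)| ≤ |A * (x * z)| * (|x * y| / ρ) := by
  have hx0 : x ≠ 0 := by intro h0; rw [h0] at hx; simp at hx; linarith
  have key : A * (y * z) = (A * (x * z)) * ((x*y) / (x*x)) := by field_simp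
  rw [key, abs_mul]
  apply mul_le_mul_of_nonneg_left _ (abs_nonneg _)
  rw [abs_div]
  rw [abs_of_pos (by nlinarith : (0:ℝ) < x*x)]
  rw [div_le_div_iff₀ (by nlinarith) hρ]
  nlinarith [abs_nonneg (x*y)]

private lemma aux_ratio_lb {x y T : ℝ} (hxy : 0 < x * y) (hT : x * x < T) :
    x * y / T ≤ y / x := by
  have hx : x ≠ 0 := by intro h0; rw [h0] at hxy; simp at hxy
  have hx2 : 0 < x * x := by rcases (mul_self_pos).2 hx with h; exact h
  have hT0 : 0 < T := lt_trans hx2 hT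
  have hyx : y / x = x * y / (x * x) := by field_simp
  rw [hyx, div_le_div_iff₀ hT0 hx2]
  nlinarith

private lemma aux_ratio_ub {x y T : ℝ} (hxy : 0 < x * y) (hT : y * y < T) :
    y / x ≤ T / (x * y) := by
  have hx : x ≠ 0 := by intro h0; rw [h0] at hxy; simp at hxy
  have hy : y ≠ 0 := by intro h0; rw [h0] at hxy; simp at hxy
  have hyx : y / x = y * y / (x * y) := by field_simp
  rw [hyx]
  rw [div_le_div_iff₀ hxy hxy]
  nlinarith

set_option maxHeartbeats 1000000 in
theorem tangentCone_oneFactor_single_nonzero (n : ℕ)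
    (S₀ : Matrix (Fin (n + 4)) (Fin (n + 4)) ℝ) (hS : S₀ ∈ oneFactorSet (n + 4))
    (h12 : 0 < S₀ 0 1)
    (hoff : ∀ i j : Fin (n + 4), i ≠ j →
      ¬((i = 0 ∧ j = 1) ∨ (i = 1 ∧ j = 0)) → S₀ i j = 0) :
    tangentConeAt' (oneFactorSet (n + 4)) S₀ =
      {S : Matrix (Fin (n + 4)) (Fin (n + 4)) ℝ | S.IsSymm ∧
        (∀ g h : Fin (n + 4), 2 ≤ (g : ℕ) → 2 ≤ (h : ℕ) → g ≠ h → S g h = 0) ∧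
        (Matrix.of fun (i : Fin 2) (j : Fin (n + 2)) =>
            S (Fin.castLE (by omega) i) ⟨(j : ℕ) + 2, by omega⟩).rank ≤ 1 ∧
        ∃ η : ℝ, S₀ 0 1 / S₀ 0 0 ≤ η ∧ η ≤ S₀ 1 1 / S₀ 0 1 ∧
          ∀ g : Fin (n + 4), 2 ≤ (g : ℕ) → S 1 g = η * S 0 g} := by
  classical
  -- matrix entry formula
  have hentry : ∀ (δ Γ : Fin (n+4) → ℝ) (i j : Fin (n+4)),
      (Matrix.diagonal δ + Matrix.vecMulVec Γ Γ) i j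
        = (if i = j then δ i else 0) + Γ i * Γ j := by
    intro δ Γ i j
    simp [Matrix.add_apply, Matrix.diagonal_apply, Matrix.vecMulVec_apply]
  have hmt : ∀ (f : ℕ → Matrix (Fin (n+4)) (Fin (n+4)) ℝ) (A : Matrix (Fin (n+4)) (Fin (n+4)) ℝ),
      Tendsto f atTop (𝓝 A) ↔ ∀ i j, Tendsto (fun k => f k i j) atTop (𝓝 (A i j)) := by
    intro f A
    exact tendsto_pi_nhds.trans (forall_congr' fun i => tendsto_pi_nhds)
  have h01 : (0 : Fin (n+4)) ≠ 1 := by simp [Fin.ext_iff]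
  have htri : ∀ i : Fin (n+4), i = 0 ∨ i = 1 ∨ 2 ≤ (i:ℕ) := by
    intro i
    rcases Nat.lt_or_ge (i : ℕ) 2 with h | h
    · interval_cases h' : (i : ℕ)
      · left; exact Fin.ext h'
      · right; left; exact Fin.ext h'
    · right; right; exact h
  have hne0 : ∀ g : Fin (n+4), 2 ≤ (g:ℕ) → g ≠ 0 := by
    intro g hg h; rw [h] at hg; simp at hg
  have hne1 : ∀ g : Fin (n+4), 2 ≤ (g:ℕ) → g ≠ 1 := by
    intro g hg h; rw [h] at hg; simp at hg
  obtain ⟨d₀, G₀, hd₀, hσ⟩ := hS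
  have hσe : ∀ i j, S₀ i j = (if i = j then d₀ i else 0) + G₀ i * G₀ j := by
    intro i j; rw [hσ]; exact hentry _ _ i j
  have hσsymm : ∀ i j, S₀ j i = S₀ i j := by
    intro i j
    rw [hσe, hσe]
    by_cases h : i = j
    · subst h; ring
    · rw [if_neg h, if_neg fun hh => h hh.symm]; ring
  have hσdiag : ∀ g, 0 < S₀ g g := by
    intro g
    rw [hσe, if_pos rfl]
    nlinarith [mul_self_nonneg (G₀ g), hd₀ g]
  have hp0 : 0 < S₀ 0 0 := hσdiag 0
  have hq0 : 0 < S₀ 1 1 := hσdiag 1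
  have hcpq : S₀ 0 1 * S₀ 0 1 < S₀ 0 0 * S₀ 1 1 := by
    have e0 := hσe 0 0; have e1 := hσe 1 1; have e01 := hσe 0 1
    rw [if_pos rfl] at e0 e1; rw [if_neg h01] at e01
    rw [e0, e1, e01]
    nlinarith [hd₀ 0, hd₀ 1, mul_self_nonneg (G₀ 0), mul_self_nonneg (G₀ 1),
      mul_pos (hd₀ 0) (hd₀ 1),
      mul_nonneg (hd₀ 0).le (mul_self_nonneg (G₀ 1)),
      mul_nonneg (hd₀ 1).le (mul_self_nonneg (G₀ 0))]
  have hσoff : ∀ i j : Fin (n+4), i ≠ j → 2 ≤ (j:ℕ) → S₀ i j = 0 := by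
    intro i j hij hj
    refine hoff i j hij ?_
    rintro (⟨-, h1⟩ | ⟨-, h0⟩)
    · exact hne1 j hj h1
    · exact hne0 j hj h0
  have hσoff' : ∀ i j : Fin (n+4), i ≠ j → 2 ≤ (i:ℕ) → S₀ i j = 0 := by
    intro i j hij hi
    rw [← hσsymm]
    exact hσoff j i (Ne.symm hij) hi
  ext S
  simp only [Set.mem_setOf_eq]
  constructor
  · rintro ⟨α, θ, hαpos, hmem, hθσ, hlim⟩
    choose dd GG hdd hθeq using hmem
    have hθe : ∀ k i j, θ k i j = (if i = j then dd k i else 0) + GG k i * GG k j := by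
      intro k i j; rw [hθeq k]; exact hentry _ _ i j
    have hθij : ∀ i j, Tendsto (fun k => θ k i j) atTop (𝓝 (S₀ i j)) := fun i j =>
      (hmt θ S₀).1 hθσ i j
    have hlimij : ∀ i j, Tendsto (fun k => α k * (θ k i j - S₀ i j)) atTop (𝓝 (S i j)) := by
      intro i j
      have h2 := (hmt _ S).1 hlim i j
      simpa [Matrix.smul_apply, Matrix.sub_apply, smul_eq_mul] using h2
    have hGprod : ∀ i j, i ≠ j → Tendsto (fun k => GG k i * GG k j) atTop (𝓝 (S₀ i j)) := by
      intro i j hij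
      simpa only [hθe, if_neg hij, zero_add] using hθij i j
    have hGsq : ∀ k (i : Fin (n+4)), GG k i * GG k i < θ k i i := by
      intro k i; rw [hθe k i i, if_pos rfl]; simp; linarith [hdd k i]
    -- the eventual "good" property
    set cc := S₀ 0 1 with hcc
    set pp := S₀ 0 0 with hpp
    set qq := S₀ 1 1 with hqq
    set ρ : ℝ := (cc/2) * (cc/2) / (qq + 1) with hρdef
    have hρpos : 0 < ρ := by positivity
    have hc01 : Tendsto (fun k => GG k 0 * GG k 1) atTop (𝓝 cc) := hGprod 0 1 h01
    have Epos : ∀ᶠ k in atTop, 0 < GG k 0 * GG k 1 := by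
      filter_upwards [hc01.eventually_const_lt (half_lt_self h12)] with k hk
      linarith
    have EPρ : ∀ᶠ k in atTop, ρ < GG k 0 * GG k 0 := by
      filter_upwards [hc01.eventually_const_lt (half_lt_self h12),
        (hθij 1 1).eventually_lt_const (lt_add_one qq)] with k h1 h2
      exact aux_sq_lower (by linarith) h1 (lt_trans (hGsq k 1) h2)
    -- generic limit for off-diagonal products with zero base point
    have hαG : ∀ i j : Fin (n+4), i ≠ j → S₀ i j = 0 →
        Tendsto (fun k => α k * (GG k i * GG k j)) atTop (𝓝 (S i j)) := by
      intro i j hij h0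
      simpa only [hθe, if_neg hij, h0, zero_add, sub_zero] using hlimij i j
    -- symmetry of S
    have hSsymm : S.IsSymm := by
      rw [Matrix.IsSymm]
      ext i j
      rw [Matrix.transpose_apply]
      have h1 := hlimij i j
      have h2 := hlimij j i
      refine tendsto_nhds_unique (Filter.Tendsto.congr (fun k => ?_) h2) h1
      have : θ k j i = θ k i j := by
        rw [hθe, hθe]
        by_cases h : i = j
        · subst h; ring
        · rw [if_neg h, if_neg fun hh => h hh.symm]; ring
      rw [this, hσsymm]
    -- zero entries
    have hzeros : ∀ g h : Fin (n+4), 2 ≤ (g:ℕ) → 2 ≤ (h:ℕ) → g ≠ h → S g h = 0 := by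
      intro g h hg hh hgh
      have hne0h : (0 : Fin (n+4)) ≠ h := fun e => hne0 h hh e.symm
      have hne0g : (0 : Fin (n+4)) ≠ g := fun e => hne0 g hg e.symm
      have h0h : S₀ 0 h = 0 := hσoff 0 h hne0h hh
      have h0g : S₀ 0 g = 0 := hσoff 0 g hne0g hg
      have l1 : Tendsto (fun k => α k * (GG k g * GG k h)) atTop (𝓝 (S g h)) :=
        hαG g h hgh (hσoff g h hgh hh)
      have l2 : Tendsto (fun k => α k * (GG k g * GG k h)) atTop (𝓝 0) := by
        apply squeeze_zero_norm'
          (a := fun k => |α k * (GG k 0 * GG k h)| * (|GG k 0 * GG k g| / ρ))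
        · filter_upwards [EPρ] with k hk
          rw [Real.norm_eq_abs]
          exact aux_bdd' hρpos hk
        · have := (hαG 0 h hne0h h0h).abs.mul ((hGprod 0 g hne0g).abs.div_const ρ)
          rw [h0g] at this
          simpa using this
      exact tendsto_nhds_unique l1 l2
    -- the η part
    have hηex : ∃ η : ℝ, cc / pp ≤ η ∧ η ≤ qq / cc ∧
        ∀ g : Fin (n+4), 2 ≤ (g:ℕ) → S 1 g = η * S 0 g := by
      by_cases hz : ∀ g : Fin (n+4), 2 ≤ (g:ℕ) → S 0 g = 0
      · refine ⟨cc / pp, le_refl _, ?_, ?_⟩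
        · rw [div_le_div_iff₀ hp0 h12]; nlinarith
        · intro g hg
          rw [hz g hg, mul_zero]
          have hne0g : (0 : Fin (n+4)) ≠ g := fun e => hne0 g hg e.symm
          have hne1g : (1 : Fin (n+4)) ≠ g := fun e => hne1 g hg e.symm
          have h0g : S₀ 0 g = 0 := hσoff 0 g hne0g hg
          have l1 : Tendsto (fun k => α k * (GG k 1 * GG k g)) atTop (𝓝 (S 1 g)) :=
            hαG 1 g hne1g (hσoff 1 g hne1g hg)
          have l2 : Tendsto (fun k => α k * (GG k 1 * GG k g)) atTop (𝓝 0) := by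
            apply squeeze_zero_norm'
              (a := fun k => |α k * (GG k 0 * GG k g)| * (|GG k 0 * GG k 1| / ρ))
            · filter_upwards [EPρ] with k hk
              rw [Real.norm_eq_abs]
              exact aux_bdd' hρpos hk
            · have := (hαG 0 g hne0g h0g).abs.mul (hc01.abs.div_const ρ)
              rw [hz g hg] at this
              simpa using this
          exact tendsto_nhds_unique l1 l2
      · push_neg at hz
        obtain ⟨g₀, hg₀2, hg₀⟩ := hz
        have hne0g₀ : (0 : Fin (n+4)) ≠ g₀ := fun e => hne0 g₀ hg₀2 e.symm
        have hne1g₀ : (1 : Fin (n+4)) ≠ g₀ := fun e => hne1 g₀ hg₀2 e.symm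
        have hL0 : Tendsto (fun k => α k * (GG k 0 * GG k g₀)) atTop (𝓝 (S 0 g₀)) :=
          hαG 0 g₀ hne0g₀ (hσoff 0 g₀ hne0g₀ hg₀2)
        have hL1 : Tendsto (fun k => α k * (GG k 1 * GG k g₀)) atTop (𝓝 (S 1 g₀)) :=
          hαG 1 g₀ hne1g₀ (hσoff 1 g₀ hne1g₀ hg₀2)
        have hne_ev : ∀ᶠ k in atTop, α k * (GG k 0 * GG k g₀) ≠ 0 :=
          hL0.eventually_ne hg₀
        have hηconv : Tendsto (fun k => GG k 1 / GG k 0) atTop (𝓝 (S 1 g₀ / S 0 g₀)) := by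
          refine Filter.Tendsto.congr' ?_ (hL1.div hL0 hg₀)
          filter_upwards [hne_ev] with k hk
          have hα0 : α k ≠ 0 := (hαpos k).ne'
          have hG0 : GG k 0 ≠ 0 := by intro h0; apply hk; rw [h0]; ring
          have hGg : GG k g₀ ≠ 0 := by intro h0; apply hk; rw [h0]; ring
          simp only [Pi.div_apply]
          field_simp
        refine ⟨S 1 g₀ / S 0 g₀, ?_, ?_, ?_⟩
        · refine le_of_tendsto_of_tendsto
            ((hc01.div (hθij 0 0) hp0.ne')) hηconv ?_
          filter_upwards [Epos] with k hk
          exact aux_ratio_lb hk (hGsq k 0)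
        · refine le_of_tendsto_of_tendsto hηconv
            ((hθij 1 1).div hc01 h12.ne') ?_
          filter_upwards [Epos] with k hk
          exact aux_ratio_ub hk (hGsq k 1)
        · intro g hg
          have hne0g : (0 : Fin (n+4)) ≠ g := fun e => hne0 g hg e.symm
          have hne1g : (1 : Fin (n+4)) ≠ g := fun e => hne1 g hg e.symm
          have l1 : Tendsto (fun k => α k * (GG k 1 * GG k g)) atTop (𝓝 (S 1 g)) :=
            hαG 1 g hne1g (hσoff 1 g hne1g hg)
          have l2 : Tendsto (fun k => α k * (GG k 1 * GG k g)) atTop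
              (𝓝 (S 1 g₀ / S 0 g₀ * S 0 g)) := by
            refine Filter.Tendsto.congr' ?_
              (hηconv.mul (hαG 0 g hne0g (hσoff 0 g hne0g hg)))
            filter_upwards [EPρ] with k hk
            have hG0 : GG k 0 ≠ 0 := by
              intro h0; rw [h0] at hk; simp at hk; linarith
            field_simp
          exact tendsto_nhds_unique l1 l2
    obtain ⟨η, hη1, hη2, hη3⟩ := hηex
    refine ⟨hSsymm, hzeros, ?_, η, hη1, hη2, hη3⟩
    -- rank bound
    have hM : (Matrix.of fun (i : Fin 2) (j : Fin (n + 2)) =>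
        S (Fin.castLE (by omega) i) ⟨(j : ℕ) + 2, by omega⟩)
        = Matrix.vecMulVec (fun i : Fin 2 => if i = 0 then 1 else η)
            (fun j : Fin (n+2) => S 0 ⟨(j : ℕ) + 2, by omega⟩) := by
      ext i j
      rw [Matrix.of_apply, Matrix.vecMulVec_apply]
      have hi : i = 0 ∨ i = 1 := by
        rcases Nat.lt_or_ge (i : ℕ) 1 with h | h
        · left; exact Fin.ext (by omega)
        · right; exact Fin.ext (by omega : (i:ℕ) = 1)
      rcases hi with rfl | rfl
      · rw [if_pos rfl, one_mul]
        rw [show (Fin.castLE (by omega : 2 ≤ n+4) (0 : Fin 2) : Fin (n+4)) = 0 from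
          Fin.ext (by simp)]
      · rw [if_neg (by simp [Fin.ext_iff] : (1 : Fin 2) ≠ 0)]
        rw [show (Fin.castLE (by omega : 2 ≤ n+4) (1 : Fin 2) : Fin (n+4)) = 1 from
          Fin.ext (by simp)]
        exact hη3 ⟨(j : ℕ) + 2, by omega⟩ (by simp)
    rw [hM, Matrix.vecMulVec_eq (Fin 1)]
    exact (Matrix.rank_mul_le_left _ _).trans
      ((Matrix.rank_le_card_width _).trans (by simp))
  · rintro ⟨hsym, hzero, -, η, hη1, hη2, hη3⟩
    set cc := S₀ 0 1 with hcc
    set pp := S₀ 0 0 with hpp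
    set qq := S₀ 1 1 with hqq
    have h10 : (1 : Fin (n+4)) ≠ 0 := Ne.symm h01
    have hσ10 : S₀ 1 0 = cc := hσsymm 0 1
    have hη0 : 0 < η := lt_of_lt_of_le (div_pos h12 hp0) hη1
    have hcη : 0 < cc / η := div_pos h12 hη0
    have hcηpp : cc / η ≤ pp := by
      rw [div_le_iff₀ hη0]
      rw [div_le_iff₀ hp0] at hη1
      nlinarith
    have hccqq : cc * cc / qq ≤ cc / η := by
      rw [div_le_div_iff₀ hq0 hη0]
      rw [le_div_iff₀ h12] at hη2
      nlinarith
    have hccqq_lt_pp : cc * cc / qq < pp := by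
      rw [div_lt_iff₀ hq0]; nlinarith
    -- the time scale
    set t : ℕ → ℝ := fun k => ((k:ℝ)+1)⁻¹ with ht_def
    have ht_pos : ∀ k, 0 < t k := fun k => by positivity
    have ht_le1 : ∀ k, t k ≤ 1 := by
      intro k
      rw [ht_def]
      apply inv_le_one_of_one_le₀
      simp
    have ht0 : Tendsto t atTop (𝓝 0) := by
      simpa only [ht_def, one_div] using tendsto_one_div_add_atTop_nhds_zero_nat (𝕜 := ℝ)
    set r : ℕ → ℝ := fun k => Real.sqrt (t k) with hr_def
    have hr_pos : ∀ k, 0 < r k := fun k => Real.sqrt_pos.2 (ht_pos k)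
    have hr_sq : ∀ k, r k * r k = t k := fun k => Real.mul_self_sqrt (ht_pos k).le
    have hr0 : Tendsto r atTop (𝓝 0) := by
      have hs : Tendsto (fun x : ℝ => Real.sqrt x) (𝓝 0) (𝓝 0) := by
        simpa using (Real.continuous_sqrt.tendsto 0)
      exact hs.comp ht0
    set A : ℕ → ℝ := fun k => max (cc*cc/qq + r k) (min (pp - r k) (cc/η)) with hA_def
    have hA_pos : ∀ k, 0 < A k := fun k =>
      lt_of_lt_of_le (by positivity) (le_max_left _ _)
    have hA_lb : ∀ k, cc*cc/qq + r k ≤ A k := fun k => le_max_left _ _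
    have hA_ub : ∀ k, 2 * r k ≤ pp - cc*cc/qq → A k ≤ pp - r k := by
      intro k hk
      exact max_le (by linarith) (min_le_left _ _)
    have hA_lim : Tendsto A atTop (𝓝 (cc/η)) := by
      have h1 : Tendsto (fun k => cc*cc/qq + r k) atTop (𝓝 (cc*cc/qq + 0)) :=
        tendsto_const_nhds.add hr0
      have h2 : Tendsto (fun k => min (pp - r k) (cc/η)) atTop
          (𝓝 (min (pp - 0) (cc/η))) := (tendsto_const_nhds.sub hr0).min tendsto_const_nhds
      have h3 := h1.max h2
      rw [add_zero, sub_zero, min_eq_right hcηpp, max_eq_right hccqq] at h3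
      exact h3
    set a : ℕ → ℝ := fun k => Real.sqrt (A k) with ha_def
    have ha_pos : ∀ k, 0 < a k := fun k => Real.sqrt_pos.2 (hA_pos k)
    have ha_sq : ∀ k, a k * a k = A k := fun k => Real.mul_self_sqrt (hA_pos k).le
    set b : ℕ → ℝ := fun k => (cc + t k * S 0 1) / a k with hb_def
    set w : ℕ → Fin (n+4) → ℝ := fun k g => t k * S 0 g / a k with hw_def
    set Γ' : ℕ → Fin (n+4) → ℝ := fun k g =>
      if g = 0 then a k else if g = 1 then b k else w k g with hG_def
    set δ' : ℕ → Fin (n+4) → ℝ := fun k g =>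
      if g = 0 then pp - a k * a k + t k * S 0 0
      else if g = 1 then qq - b k * b k + t k * S 1 1
      else S₀ g g + t k * S g g - w k g * w k g with hd_def
    set θ' : ℕ → Matrix (Fin (n+4)) (Fin (n+4)) ℝ := fun k =>
      Matrix.diagonal (δ' k) + Matrix.vecMulVec (Γ' k) (Γ' k) with hθ'_def
    have hG0 : ∀ k, Γ' k 0 = a k := fun k => by simp [hG_def]
    have hG1 : ∀ k, Γ' k 1 = b k := fun k => by simp [hG_def, h10]
    have hGg : ∀ k (g : Fin (n+4)), 2 ≤ (g:ℕ) → Γ' k g = w k g := by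
      intro k g hg
      simp [hG_def, hne0 g hg, hne1 g hg]
    have hd0 : ∀ k, δ' k 0 = pp - a k * a k + t k * S 0 0 := fun k => by simp [hd_def]
    have hd1 : ∀ k, δ' k 1 = qq - b k * b k + t k * S 1 1 := fun k => by
      simp [hd_def, h10]
    have hdg : ∀ k (g : Fin (n+4)), 2 ≤ (g:ℕ) →
        δ' k g = S₀ g g + t k * S g g - w k g * w k g := by
      intro k g hg
      simp [hd_def, hne0 g hg, hne1 g hg]
    have hθ'e : ∀ k i j, θ' k i j = (if i = j then δ' k i else 0) + Γ' k i * Γ' k j := by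
      intro k i j
      simp only [hθ'_def]
      exact hentry _ _ i j
    have hab : ∀ k, a k * b k = cc + t k * S 0 1 := by
      intro k
      simp only [hb_def]
      field_simp
      exact mul_div_cancel_left₀ _ (ha_pos k).ne'
    have hbbA : ∀ k, b k * b k * A k = (cc + t k * S 0 1)^2 := by
      intro k
      simp only [hb_def]
      rw [← ha_sq k]
      field_simp [(ha_pos k).ne']
    clear_value cc pp qq t r A a b w Γ' δ' θ'
    -- entrywise limits of the rescaled differences
    have key : ∀ i j, Tendsto (fun k => (t k)⁻¹ * (θ' k i j - S₀ i j)) atTop (𝓝 (S i j)) := by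
      intro i j
      rcases htri i with hi | hi | hi
      · subst hi
        rcases htri j with hj | hj | hj
        · subst hj
          have e : ∀ k, (t k)⁻¹ * (θ' k 0 0 - S₀ 0 0) = S 0 0 := by
            intro k
            rw [hθ'e, if_pos rfl, hG0, hd0]
            field_simp [(ht_pos k).ne']
            rw [hpp]
            ring
          exact Tendsto.congr (fun k => (e k).symm) tendsto_const_nhds
        · subst hj
          have e : ∀ k, (t k)⁻¹ * (θ' k 0 1 - S₀ 0 1) = S 0 1 := by
            intro k
            rw [hθ'e, if_neg h01, hG0, hG1, zero_add, hab k]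
            field_simp [(ht_pos k).ne']
            rw [hcc]
            ring
          exact Tendsto.congr (fun k => (e k).symm) tendsto_const_nhds
        · have h0j : (0 : Fin (n+4)) ≠ j := fun e => hne0 j hj e.symm
          have e : ∀ k, (t k)⁻¹ * (θ' k 0 j - S₀ 0 j) = S 0 j := by
            intro k
            rw [hθ'e, if_neg h0j, hG0, hGg k j hj, hσoff 0 j h0j hj]
            simp only [hw_def]
            field_simp [(ha_pos k).ne', (ht_pos k).ne']
            ring
          exact Tendsto.congr (fun k => (e k).symm) tendsto_const_nhds
      · subst hi
        rcases htri j with hj | hj | hj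
        · subst hj
          have e : ∀ k, (t k)⁻¹ * (θ' k 1 0 - S₀ 1 0) = S 0 1 := by
            intro k
            rw [hθ'e, if_neg h10, hG0, hG1, zero_add, hσ10, mul_comm (b k) (a k), hab k]
            field_simp [(ht_pos k).ne']
            ring
          rw [show S 1 0 = S 0 1 from hsym.apply 0 1]
          exact Tendsto.congr (fun k => (e k).symm) tendsto_const_nhds
        · subst hj
          have e : ∀ k, (t k)⁻¹ * (θ' k 1 1 - S₀ 1 1) = S 1 1 := by
            intro k
            rw [hθ'e, if_pos rfl, hG1, hd1]
            field_simp [(ht_pos k).ne']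
            rw [hqq]
            ring
          exact Tendsto.congr (fun k => (e k).symm) tendsto_const_nhds
        · have h1j : (1 : Fin (n+4)) ≠ j := fun e => hne1 j hj e.symm
          have e : ∀ k, (t k)⁻¹ * (θ' k 1 j - S₀ 1 j)
              = S 0 j * ((cc + t k * S 0 1) / A k) := by
            intro k
            rw [hθ'e, if_neg h1j, hG1, hGg k j hj, hσoff 1 j h1j hj]
            simp only [hb_def, hw_def]
            rw [← ha_sq k]
            field_simp [(ha_pos k).ne', (ht_pos k).ne']
            ring
          have hlim2 : Tendsto (fun k => S 0 j * ((cc + t k * S 0 1) / A k)) atTop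
              (𝓝 (S 0 j * ((cc + 0) / (cc/η)))) := by
            apply Tendsto.mul tendsto_const_nhds
            apply Tendsto.div _ hA_lim hcη.ne'
            have : Tendsto (fun k => t k * S 0 1) atTop (𝓝 (0 * S 0 1)) :=
              ht0.mul_const _
            simpa using tendsto_const_nhds.add this
          have hval : S 0 j * ((cc + 0) / (cc/η)) = S 1 j := by
            rw [hη3 j hj, add_zero, div_div_eq_mul_div, mul_comm cc η, mul_div_assoc,
              div_self h12.ne', mul_one]
            ring
          rw [hval] at hlim2
          exact Tendsto.congr (fun k => (e k).symm) hlim2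
      · rcases htri j with hj | hj | hj
        · subst hj
          have h0i : (0 : Fin (n+4)) ≠ i := fun e => hne0 i hi e.symm
          have e : ∀ k, (t k)⁻¹ * (θ' k i 0 - S₀ i 0) = S 0 i := by
            intro k
            rw [hθ'e, if_neg (Ne.symm h0i), hG0, hGg k i hi, hσoff' i 0 (Ne.symm h0i) hi]
            simp only [hw_def]
            field_simp [(ha_pos k).ne', (ht_pos k).ne']
            ring
          rw [show S i 0 = S 0 i from hsym.apply 0 i]
          exact Tendsto.congr (fun k => (e k).symm) tendsto_const_nhds
        · subst hj
          have h1i : (1 : Fin (n+4)) ≠ i := fun e => hne1 i hi e.symm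
          have e : ∀ k, (t k)⁻¹ * (θ' k i 1 - S₀ i 1)
              = S 0 i * ((cc + t k * S 0 1) / A k) := by
            intro k
            rw [hθ'e, if_neg (Ne.symm h1i), hG1, hGg k i hi, hσoff' i 1 (Ne.symm h1i) hi]
            simp only [hb_def, hw_def]
            rw [← ha_sq k]
            field_simp [(ha_pos k).ne', (ht_pos k).ne']
            ring
          have hlim2 : Tendsto (fun k => S 0 i * ((cc + t k * S 0 1) / A k)) atTop
              (𝓝 (S 0 i * ((cc + 0) / (cc/η)))) := by
            apply Tendsto.mul tendsto_const_nhds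
            apply Tendsto.div _ hA_lim hcη.ne'
            have : Tendsto (fun k => t k * S 0 1) atTop (𝓝 (0 * S 0 1)) :=
              ht0.mul_const _
            simpa using tendsto_const_nhds.add this
          have hval : S 0 i * ((cc + 0) / (cc/η)) = S 1 i := by
            rw [hη3 i hi, add_zero, div_div_eq_mul_div, mul_comm cc η, mul_div_assoc,
              div_self h12.ne', mul_one]
            ring
          rw [hval] at hlim2
          rw [show S i 1 = S 1 i from hsym.apply 1 i]
          exact Tendsto.congr (fun k => (e k).symm) hlim2
        · by_cases hij : i = j
          · subst hij
            have e : ∀ k, (t k)⁻¹ * (θ' k i i - S₀ i i) = S i i := by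
              intro k
              rw [hθ'e, if_pos rfl, hGg k i hi, hdg k i hi]
              field_simp [(ht_pos k).ne']
              ring
            exact Tendsto.congr (fun k => (e k).symm) tendsto_const_nhds
          · have e : ∀ k, (t k)⁻¹ * (θ' k i j - S₀ i j)
                = t k * (S 0 i * S 0 j) / A k := by
              intro k
              rw [hθ'e, if_neg hij, hGg k i hi, hGg k j hj, hσoff i j hij hj]
              simp only [hw_def]
              rw [← ha_sq k]
              field_simp [(ha_pos k).ne', (ht_pos k).ne']
              ring
            have hlim2 : Tendsto (fun k => t k * (S 0 i * S 0 j) / A k) atTop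
                (𝓝 (0 * (S 0 i * S 0 j) / (cc/η))) :=
              (ht0.mul_const _).div hA_lim hcη.ne'
            rw [hzero i j hi hj hij]
            have : (0 : ℝ) * (S 0 i * S 0 j) / (cc/η) = 0 := by ring
            rw [this] at hlim2
            exact Tendsto.congr (fun k => (e k).symm) hlim2
    -- eventual positivity of δ'
    have hδpos : ∀ᶠ k in atTop, ∀ i, 0 < δ' k i := by
      rw [eventually_all]
      intro i
      rcases htri i with hi | hi | hi
      · subst hi
        have F1 : ∀ᶠ k in atTop, 2 * r k ≤ pp - cc*cc/qq := by
          filter_upwards [hr0.eventually_lt_const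
            (show (0:ℝ) < (pp - cc*cc/qq)/2 by linarith)] with k hk
          linarith
        have F2 : ∀ᶠ k in atTop, r k * |S 0 0| < 1 := by
          have : Tendsto (fun k => r k * |S 0 0|) atTop (𝓝 (0 * |S 0 0|)) :=
            hr0.mul_const _
          rw [zero_mul] at this
          exact this.eventually_lt_const one_pos
        filter_upwards [F1, F2] with k hk1 hk2
        rw [hd0, ha_sq]
        have h1 : A k ≤ pp - r k := hA_ub k hk1
        have h2 : t k * (-|S 0 0|) ≤ t k * S 0 0 :=
          mul_le_mul_of_nonneg_left (neg_abs_le _) (ht_pos k).le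
        have h3 : r k * (r k * |S 0 0|) < r k * 1 :=
          mul_lt_mul_of_pos_left hk2 (hr_pos k)
        have h4 : t k * |S 0 0| < r k := by
          rw [← hr_sq k]
          nlinarith [hr_pos k]
        nlinarith
      · subst hi
        have F1 : ∀ᶠ k in atTop, 2 * r k ≤ pp - cc*cc/qq := by
          filter_upwards [hr0.eventually_lt_const
            (show (0:ℝ) < (pp - cc*cc/qq)/2 by linarith)] with k hk
          linarith
        have F3 : ∀ᶠ k in atTop,
            r k * (2*cc*|S 0 1| + |S 0 1| * |S 0 1|) < qq/2 := by
          have : Tendsto (fun k => r k * (2*cc*|S 0 1| + |S 0 1| * |S 0 1|)) atTop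
              (𝓝 (0 * (2*cc*|S 0 1| + |S 0 1| * |S 0 1|))) := hr0.mul_const _
          rw [zero_mul] at this
          exact this.eventually_lt_const (by linarith)
        have F4 : ∀ᶠ k in atTop, r k * |S 1 1| < qq/(2*pp) := by
          have : Tendsto (fun k => r k * |S 1 1|) atTop (𝓝 (0 * |S 1 1|)) :=
            hr0.mul_const _
          rw [zero_mul] at this
          exact this.eventually_lt_const (by positivity)
        filter_upwards [F1, F3, F4] with k hk1 hk3 hk4
        rw [hd1]
        have hApp : A k ≤ pp := le_trans (hA_ub k hk1) (by linarith [hr_pos k])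
        have g1 : cc*cc + qq * r k ≤ qq * A k := by
          have heq : qq * (cc*cc/qq + r k) = cc*cc + qq * r k := by
            field_simp
          rw [← heq]
          exact mul_le_mul_of_nonneg_left (hA_lb k) hq0.le
        have g2 : (cc + t k * S 0 1)^2
            ≤ cc*cc + t k * (2*cc*|S 0 1| + |S 0 1| * |S 0 1|) := by
          have u1 : t k * S 0 1 ≤ t k * |S 0 1| :=
            mul_le_mul_of_nonneg_left (le_abs_self _) (ht_pos k).le
          have habs : |S 0 1| * |S 0 1| = S 0 1 * S 0 1 := abs_mul_abs_self _
          have w1 : t k * (S 0 1 * S 0 1) ≤ S 0 1 * S 0 1 := by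
            nlinarith [mul_self_nonneg (S 0 1), ht_le1 k, ht_pos k]
          rw [habs]
          nlinarith [u1, w1, ht_pos k, h12,
            mul_le_mul_of_nonneg_left u1 (show (0:ℝ) ≤ 2*cc by linarith),
            mul_le_mul_of_nonneg_left w1 (ht_pos k).le]
        have g3 : -(t k * |S 1 1| * pp) ≤ t k * S 1 1 * A k := by
          have u1 : t k * (-|S 1 1|) ≤ t k * S 1 1 :=
            mul_le_mul_of_nonneg_left (neg_abs_le _) (ht_pos k).le
          have v1 : (t k * (-|S 1 1|)) * A k ≤ (t k * S 1 1) * A k :=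
            mul_le_mul_of_nonneg_right u1 (hA_pos k).le
          have hneg : -(t k * |S 1 1|) ≤ 0 := by
            nlinarith [ht_pos k, abs_nonneg (S 1 1)]
          have v2 : (-(t k * |S 1 1|)) * pp ≤ (-(t k * |S 1 1|)) * A k :=
            mul_le_mul_of_nonpos_left hApp hneg
          nlinarith [v1, v2]
        have g4 : t k * (2*cc*|S 0 1| + |S 0 1| * |S 0 1|) < r k * (qq/2) := by
          rw [← hr_sq k]
          nlinarith [hr_pos k]
        have g5 : t k * |S 1 1| * pp < r k * (qq/2) := by
          rw [← hr_sq k]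
          have := mul_lt_mul_of_pos_left hk4 (mul_pos (hr_pos k) hp0)
          calc r k * r k * |S 1 1| * pp = (r k * pp) * (r k * |S 1 1|) := by ring
            _ < (r k * pp) * (qq/(2*pp)) := by
                apply mul_lt_mul_of_pos_left hk4 (mul_pos (hr_pos k) hp0)
            _ = r k * (qq/2) := by field_simp
        have hXA : 0 < (qq - b k * b k + t k * S 1 1) * A k := by
          have e1 : (qq - b k * b k + t k * S 1 1) * A k
              = qq * A k - b k * b k * A k + t k * S 1 1 * A k := by ring
          rw [e1, hbbA k]
          nlinarith [hr_pos k]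
        nlinarith [hA_pos k]
      · have hw_lim : Tendsto (fun k => w k i) atTop (𝓝 0) := by
          simp only [hw_def]
          have h1 : Tendsto (fun k => t k * S 0 i) atTop (𝓝 (0 * S 0 i)) :=
            ht0.mul_const _
          have ha_lim : Tendsto a atTop (𝓝 (Real.sqrt (cc/η))) := by
            simp only [ha_def]
            exact (Real.continuous_sqrt.tendsto _).comp hA_lim
          have h2 := h1.div ha_lim (Real.sqrt_pos.2 hcη).ne'
          rw [zero_mul, zero_div] at h2
          exact h2
        have hδ_lim : Tendsto (fun k => δ' k i) atTop (𝓝 (S₀ i i)) := by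
          have h1 : Tendsto (fun k => S₀ i i + t k * S i i - w k i * w k i) atTop
              (𝓝 (S₀ i i + 0 * S i i - 0 * 0)) :=
            (tendsto_const_nhds.add (ht0.mul_const _)).sub (hw_lim.mul hw_lim)
          have h2 : S₀ i i + 0 * S i i - 0 * 0 = S₀ i i := by ring
          rw [h2] at h1
          exact Tendsto.congr (fun k => (hdg k i hi).symm) h1
        exact hδ_lim.eventually_const_lt (hσdiag i)
    -- assemble the sequence
    refine ⟨fun k => (t k)⁻¹, fun k => if h : ∀ i, 0 < δ' k i then θ' k else S₀,
      fun k => inv_pos.2 (ht_pos k), fun k => ?_, ?_, ?_⟩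
    · dsimp only
      split
      · exact ⟨δ' k, Γ' k, by assumption, by rw [hθ'_def]⟩
      · exact ⟨d₀, G₀, hd₀, hσ⟩
    · -- convergence of the points
      have hPθ : ∀ᶠ k in atTop,
          (if h : ∀ i, 0 < δ' k i then θ' k else S₀) = θ' k :=
        hδpos.mono fun k hk => dif_pos hk
      rw [hmt]
      intro i j
      have h1 : Tendsto (fun k => t k * ((t k)⁻¹ * (θ' k i j - S₀ i j))) atTop
          (𝓝 (0 * S i j)) := ht0.mul (key i j)
      have h2 : Tendsto (fun k => θ' k i j - S₀ i j) atTop (𝓝 0) := by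
        rw [zero_mul] at h1
        refine Filter.Tendsto.congr (fun k => ?_) h1
        rw [← mul_assoc, mul_inv_cancel₀ (ht_pos k).ne', one_mul]
      have h3 : Tendsto (fun k => θ' k i j) atTop (𝓝 (S₀ i j)) := by
        have := tendsto_const_nhds.add h2 (f := fun _ : ℕ => S₀ i j)
        rw [add_zero] at this
        refine Filter.Tendsto.congr (fun k => ?_) this
        ring
      refine Filter.Tendsto.congr' ?_ h3
      filter_upwards [hPθ] with k hk
      rw [hk]
    · have hPθ : ∀ᶠ k in atTop,
          (if h : ∀ i, 0 < δ' k i then θ' k else S₀) = θ' k :=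
        hδpos.mono fun k hk => dif_pos hk
      have hlimθ' : Tendsto (fun k => (t k)⁻¹ • (θ' k - S₀)) atTop (𝓝 S) := by
        rw [hmt]
        intro i j
        simpa [Matrix.smul_apply, Matrix.sub_apply, smul_eq_mul] using key i j
      refine Filter.Tendsto.congr' ?_ hlimθ'
      filter_upwards [hPθ] with k hk
      rw [hk]
end
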